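/- arXiv:1604.01630 — 4 statements merged into one kernel-verified Lean document; each statement's English description precedes it below -/
import Mathlib

section
/- Let A(z), B(z), C(z), R₁(z), R₂(z), R₃(z) and polynomials A_i, B_i, C_i (i = 1,2,3) over ℚ satisfy A_i(z)F(z) + B_i(z)G(z) + C_i(z) = R_i(z) as formal power series, where F, G ∈ ℚ[[z]]. If deg A_i, deg B_i, deg C_i ≤ D_i and the order of vanishing of each R_i at 0 is at least o, with o > D₁ + D₂ + D₃, then the determinant det[(A_i, B_i, C_i)_{i=1,2,3}] vanishes identically. -/
open Polynomial

private lemma natDeg_triple_mul (p q r : Polynomial ℚ) (a b c : ℕ)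
    (hp : p.natDegree ≤ a) (hq : q.natDegree ≤ b) (hr : r.natDegree ≤ c) :
    (p * (q * r)).natDegree ≤ a + b + c := by
  calc (p * (q * r)).natDegree ≤ p.natDegree + (q * r).natDegree := natDegree_mul_le
    _ ≤ a + (q.natDegree + r.natDegree) := add_le_add hp natDegree_mul_le
    _ ≤ a + (b + c) := by exact add_le_add le_rfl (add_le_add hq hr)
    _ = a + b + c := by ring

/-- If the common order of vanishing exceeds the sum of the degree bounds,
the Hermite–Padé determinant vanishes. -/
theorem determinant_vanishes (F G : PowerSeries ℚ)
    (A B C : Fin 3 → Polynomial ℚ) (R : Fin 3 → PowerSeries ℚ)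
    (D : Fin 3 → ℕ) (o : ℕ)
    (hrel : ∀ i, (A i : PowerSeries ℚ) * F + (B i : PowerSeries ℚ) * G
        + (C i : PowerSeries ℚ) = R i)
    (hdegA : ∀ i, (A i).natDegree ≤ D i)
    (hdegB : ∀ i, (B i).natDegree ≤ D i)
    (hdegC : ∀ i, (C i).natDegree ≤ D i)
    (hord : ∀ i, ∀ n < o, PowerSeries.coeff n (R i) = 0)
    (ho : D 0 + D 1 + D 2 < o) :
    Matrix.det ![![A 0, B 0, C 0], ![A 1, B 1, C 1], ![A 2, B 2, C 2]] = 0 := by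
  set M : Polynomial ℚ :=
    Matrix.det ![![A 0, B 0, C 0], ![A 1, B 1, C 1], ![A 2, B 2, C 2]] with hM
  have hMval : M = C 0 * (A 1 * B 2 - A 2 * B 1) - C 1 * (A 0 * B 2 - A 2 * B 0)
      + C 2 * (A 0 * B 1 - A 1 * B 0) := by
    rw [hM]; erw [Matrix.det_fin_three]; simp; ring
  -- the determinant as a power series is a combination of the R i
  have hps : (M : PowerSeries ℚ) =
      R 0 * ((A 1 * B 2 - A 2 * B 1 : Polynomial ℚ) : PowerSeries ℚ)
      - R 1 * ((A 0 * B 2 - A 2 * B 0 : Polynomial ℚ) : PowerSeries ℚ)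
      + R 2 * ((A 0 * B 1 - A 1 * B 0 : Polynomial ℚ) : PowerSeries ℚ) := by
    rw [← hrel 0, ← hrel 1, ← hrel 2, hMval]
    push_cast
    ring
  -- degree bound
  have hdeg : M.natDegree ≤ D 0 + D 1 + D 2 := by
    rw [hMval]
    have key : ∀ i j k l m : Fin 3, D j + D k = D l + D m →
        (C i * (A j * B k - A l * B m)).natDegree ≤ D i + (D j + D k) := by
      intro i j k l m h
      have h1 : (A j * B k).natDegree ≤ D j + D k :=
        le_trans natDegree_mul_le (add_le_add (hdegA j) (hdegB k))
      have h2 : (A l * B m).natDegree ≤ D j + D k :=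
        le_trans natDegree_mul_le (by have := add_le_add (hdegA l) (hdegB m); omega)
      have h3 : (A j * B k - A l * B m).natDegree ≤ D j + D k :=
        le_trans (natDegree_sub_le _ _) (max_le h1 h2)
      exact le_trans natDegree_mul_le (add_le_add (hdegC i) h3)
    have k0 := key 0 1 2 2 1 (by omega)
    have k1 := key 1 0 2 2 0 (by omega)
    have k2 := key 2 0 1 1 0 (by omega)
    refine le_trans (natDegree_add_le _ _)
      (max_le (le_trans (natDegree_sub_le _ _) (max_le (by omega) (by omega))) (by omega))
  -- order bound on products with R i
  have hcoeff : ∀ (i : Fin 3) (P : Polynomial ℚ) (n : ℕ), n < o →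
      PowerSeries.coeff n (R i * (P : PowerSeries ℚ)) = 0 := by
    intro i P n hn
    rw [PowerSeries.coeff_mul]
    refine Finset.sum_eq_zero fun p hp => ?_
    have : p.1 < o := lt_of_le_of_lt (Finset.HasAntidiagonal.antidiagonal.fst_le hp) hn
    rw [hord i p.1 this, zero_mul]
  ext n
  rcases lt_or_ge n o with hn | hn
  · have := congrArg (PowerSeries.coeff n) hps
    rw [Polynomial.coeff_coe] at this
    rw [this, map_add, map_sub, hcoeff 0 _ n hn, hcoeff 1 _ n hn, hcoeff 2 _ n hn]
    simp
  · simp [Polynomial.coeff_eq_zero_of_natDegree_lt (lt_of_le_of_lt hdeg (lt_of_lt_of_le ho hn))]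
end

section
/- In the setting of Hermite–Padé approximations A_i F + B_i G + C_i = R_i (i = 1,2,3) with deg A_i, deg B_i, deg C_i ≤ D_i and ord R_i ≥ o_i where o₁ ≤ o₂ ≤ o₃, the determinant Δ(z) := det[(A_i, B_i, C_i)] satisfies: if Δ ≠ 0 then o₁ ≤ ord Δ and deg Δ ≤ D₁ + D₂ + D₃. Consequently Δ(z) = z^{o₁} D(z) for some polynomial D with deg D ≤ D₁ + D₂ + D₃ − o₁. -/
open Polynomial

private lemma aux_mul_coeff (s r : PowerSeries ℚ) (k n : ℕ)
    (h : ∀ m < k, PowerSeries.coeff m r = 0) (hn : n < k) :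
    PowerSeries.coeff n (s * r) = 0 := by
  rw [PowerSeries.coeff_mul]
  apply Finset.sum_eq_zero
  intro p hp
  rw [Finset.HasAntidiagonal.mem_antidiagonal] at hp
  rw [h p.2 (by omega), mul_zero]

/-- If the Hermite–Padé determinant `Δ` is nonzero, then `ord Δ ≥ o₁` and
`deg Δ ≤ D₁+D₂+D₃`; consequently `Δ = z^{o₁}·D(z)` with `deg D ≤ D₁+D₂+D₃-o₁`. -/
theorem determinant_factorization (F G : PowerSeries ℚ)
    (A B C : Fin 3 → Polynomial ℚ) (R : Fin 3 → PowerSeries ℚ)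
    (D : Fin 3 → ℕ) (o : Fin 3 → ℕ)
    (hrel : ∀ i, (A i : PowerSeries ℚ) * F + (B i : PowerSeries ℚ) * G
        + (C i : PowerSeries ℚ) = R i)
    (hdegA : ∀ i, (A i).natDegree ≤ D i)
    (hdegB : ∀ i, (B i).natDegree ≤ D i)
    (hdegC : ∀ i, (C i).natDegree ≤ D i)
    (hord : ∀ i, ∀ n < o i, PowerSeries.coeff n (R i) = 0)
    (ho12 : o 0 ≤ o 1) (ho23 : o 1 ≤ o 2)
    (Δ : Polynomial ℚ)
    (hΔ : Δ = Matrix.det ![![A 0, B 0, C 0], ![A 1, B 1, C 1], ![A 2, B 2, C 2]])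
    (hne : Δ ≠ 0) :
    (X : Polynomial ℚ) ^ o 0 ∣ Δ ∧ Δ.natDegree ≤ D 0 + D 1 + D 2 ∧
      ∃ Dpoly : Polynomial ℚ, Δ = X ^ o 0 * Dpoly ∧
        Dpoly.natDegree ≤ D 0 + D 1 + D 2 - o 0 := by
  have hΔ2 : Δ = A 0 * (B 1 * C 2) - A 0 * (C 1 * B 2) - B 0 * (A 1 * C 2)
      + B 0 * (C 1 * A 2) + C 0 * (A 1 * B 2) - C 0 * (B 1 * A 2) := by
    rw [hΔ]
    erw [Matrix.det_fin_three]
    simp [Matrix.cons_val_zero, Matrix.cons_val_one]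
    ring
  -- degree bound: each of the six products has natDegree ≤ D 0 + D 1 + D 2
  have tri : ∀ (p q r : Polynomial ℚ) (a b c : ℕ), p.natDegree ≤ a → q.natDegree ≤ b →
      r.natDegree ≤ c → (p * (q * r)).natDegree ≤ a + (b + c) := by
    intro p q r a b c hp hq hr
    refine le_trans natDegree_mul_le (add_le_add hp ?_)
    exact le_trans natDegree_mul_le (add_le_add hq hr)
  have hdeg : Δ.natDegree ≤ D 0 + D 1 + D 2 := by
    rw [hΔ2]
    refine le_trans (natDegree_sub_le _ _) (max_le ?_ ?_)
    · refine le_trans (natDegree_add_le _ _) (max_le ?_ ?_)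
      · refine le_trans (natDegree_add_le _ _) (max_le ?_ ?_)
        · refine le_trans (natDegree_sub_le _ _) (max_le ?_ ?_)
          · refine le_trans (natDegree_sub_le _ _) (max_le ?_ ?_)
            · exact le_trans (tri _ _ _ _ _ _ (hdegA 0) (hdegB 1) (hdegC 2)) (by omega)
            · exact le_trans (tri _ _ _ _ _ _ (hdegA 0) (hdegC 1) (hdegB 2)) (by omega)
          · exact le_trans (tri _ _ _ _ _ _ (hdegB 0) (hdegA 1) (hdegC 2)) (by omega)
        · exact le_trans (tri _ _ _ _ _ _ (hdegB 0) (hdegC 1) (hdegA 2)) (by omega)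
      · exact le_trans (tri _ _ _ _ _ _ (hdegC 0) (hdegA 1) (hdegB 2)) (by omega)
    · exact le_trans (tri _ _ _ _ _ _ (hdegC 0) (hdegB 1) (hdegA 2)) (by omega)
  -- column operation: as a power series, Δ is a combination of the remainders R i
  have key : (Δ : PowerSeries ℚ) =
      ((A 1 : PowerSeries ℚ) * (B 2 : PowerSeries ℚ)
          - (A 2 : PowerSeries ℚ) * (B 1 : PowerSeries ℚ)) * R 0
        + ((A 2 : PowerSeries ℚ) * (B 0 : PowerSeries ℚ)
          - (A 0 : PowerSeries ℚ) * (B 2 : PowerSeries ℚ)) * R 1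
        + ((A 0 : PowerSeries ℚ) * (B 1 : PowerSeries ℚ)
          - (A 1 : PowerSeries ℚ) * (B 0 : PowerSeries ℚ)) * R 2 := by
    have h0 := hrel 0
    have h1 := hrel 1
    have h2 := hrel 2
    rw [hΔ2]
    push_cast
    linear_combination ((A 1 : PowerSeries ℚ) * (B 2 : PowerSeries ℚ)
        - (A 2 : PowerSeries ℚ) * (B 1 : PowerSeries ℚ)) * h0
      + ((A 2 : PowerSeries ℚ) * (B 0 : PowerSeries ℚ)
        - (A 0 : PowerSeries ℚ) * (B 2 : PowerSeries ℚ)) * h1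
      + ((A 0 : PowerSeries ℚ) * (B 1 : PowerSeries ℚ)
        - (A 1 : PowerSeries ℚ) * (B 0 : PowerSeries ℚ)) * h2
  -- low coefficients of Δ vanish
  have hcoef : ∀ n < o 0, Δ.coeff n = 0 := by
    intro n hn
    have h : Δ.coeff n = PowerSeries.coeff n (Δ : PowerSeries ℚ) := by
      rw [Polynomial.coeff_coe]
    rw [h, key, map_add, map_add,
      aux_mul_coeff _ _ (o 0) n (hord 0) hn,
      aux_mul_coeff _ _ (o 1) n (hord 1) (by omega),
      aux_mul_coeff _ _ (o 2) n (hord 2) (by omega)]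
    ring
  have hdvd : (X : Polynomial ℚ) ^ o 0 ∣ Δ := by
    rw [Polynomial.X_pow_dvd_iff]
    exact hcoef
  obtain ⟨Dpoly, hD⟩ := hdvd
  have hDne : Dpoly ≠ 0 := by
    rintro rfl
    rw [mul_zero] at hD
    exact hne hD
  have hdegD : Δ.natDegree = o 0 + Dpoly.natDegree := by
    rw [hD, natDegree_mul (pow_ne_zero _ X_ne_zero) hDne, natDegree_pow, natDegree_X, mul_one]
  exact ⟨⟨Dpoly, hD⟩, hdeg, Dpoly, hD, by omega⟩
end

section
/- Fundamental Lemma: Let γ₁, γ₂ be real numbers, b ≥ 2 and d ≥ 2 integers. Suppose for indices ℓ = 1,…,L and i = 1,2,3 there are integer linear forms a_{ℓ,i,m}γ₁ + b_{ℓ,i,m}γ₂ + c_{ℓ,i,m} = r_{ℓ,i,m} (for all m ≥ m₀) satisfying: (i) max{|a_{ℓ,i,m}|, |b_{ℓ,i,m}|} ≤ c₁·b^{E(ℓ,i)d^m}; (ii) |r_{ℓ,i,m}| ≤ c₂·b^{−V(ℓ,i)d^m} with V(ℓ,i) > 0; (iii) the 3×3 determinant of the coefficient triples (a_{ℓ,i,m},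 b_{ℓ,i,m}, c_{ℓ,i,m})_{i=1,2,3} is nonzero for all m ≥ m₀. Define θ(ℓ) = max_{i<j}(E(ℓ,i)+E(ℓ,j)) and ν(ℓ) = min_{i≠j}(V(ℓ,i)−E(ℓ,j)), and suppose 0 < ν(1) < ⋯ < ν(L) < d·ν(1). Then there exist constants C > 0 and H₀ > 0 such that for all integers h₀, h₁, h₂ not all zero, |h₀ + h₁γ₁ + h₂γ₂| > C·H^{−μ}, where H = max{|h₁|, |h₂|, H₀} and μ = max_{1≤ℓ≤L} θ(ℓ+1)/ν(ℓ) with θ(L+1) := d·θ(1). -/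
open Real

private lemma abs_six' (x1 x2 x3 x4 x5 x6 : ℝ) :
    |x1 - x2 - x3 + x4 + x5 - x6| ≤ |x1| + |x2| + |x3| + |x4| + |x5| + |x6| := by
  have a1 := abs_sub x1 x2
  have a2 := abs_sub (x1 - x2) x3
  have a3 := abs_add_le (x1 - x2 - x3) x4
  have a4 := abs_add_le (x1 - x2 - x3 + x4) x5
  have a5 := abs_sub (x1 - x2 - x3 + x4 + x5) x6
  linarith

/-- Cramer-type selection: if the rows p,q,r have nonzero determinant and h ≠ 0,
then one of the three determinants obtained by appending h to a pair of rows is nonzero. -/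
private lemma cramer_sel (pa pb pc qa qb qc ra rb rc h1 h2 h0 : ℤ)
    (hD : pa*qb*rc - pa*qc*rb - pb*qa*rc + pb*qc*ra + pc*qa*rb - pc*qb*ra ≠ 0)
    (hh : ¬(h0 = 0 ∧ h1 = 0 ∧ h2 = 0)) :
    (qa*rb*h0 - qa*rc*h2 - qb*ra*h0 + qb*rc*h1 + qc*ra*h2 - qc*rb*h1 ≠ 0) ∨
    (ra*pb*h0 - ra*pc*h2 - rb*pa*h0 + rb*pc*h1 + rc*pa*h2 - rc*pb*h1 ≠ 0) ∨
    (pa*qb*h0 - pa*qc*h2 - pb*qa*h0 + pb*qc*h1 + pc*qa*h2 - pc*qb*h1 ≠ 0) := by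
  by_contra hcon
  push_neg at hcon
  obtain ⟨e1, e2, e3⟩ := hcon
  set D := pa*qb*rc - pa*qc*rb - pb*qa*rc + pb*qc*ra + pc*qa*rb - pc*qb*ra with hDdef
  apply hh
  have k1 : D * h1 = 0 := by
    have : D * h1 =
      (qa*rb*h0 - qa*rc*h2 - qb*ra*h0 + qb*rc*h1 + qc*ra*h2 - qc*rb*h1) * pa +
      (ra*pb*h0 - ra*pc*h2 - rb*pa*h0 + rb*pc*h1 + rc*pa*h2 - rc*pb*h1) * qa +
      (pa*qb*h0 - pa*qc*h2 - pb*qa*h0 + pb*qc*h1 + pc*qa*h2 - pc*qb*h1) * ra := by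
      rw [hDdef]; ring
    rw [this, e1, e2, e3]; ring
  have k2 : D * h2 = 0 := by
    have : D * h2 =
      (qa*rb*h0 - qa*rc*h2 - qb*ra*h0 + qb*rc*h1 + qc*ra*h2 - qc*rb*h1) * pb +
      (ra*pb*h0 - ra*pc*h2 - rb*pa*h0 + rb*pc*h1 + rc*pa*h2 - rc*pb*h1) * qb +
      (pa*qb*h0 - pa*qc*h2 - pb*qa*h0 + pb*qc*h1 + pc*qa*h2 - pc*qb*h1) * rb := by
      rw [hDdef]; ring
    rw [this, e1, e2, e3]; ring
  have k0 : D * h0 = 0 := by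
    have : D * h0 =
      (qa*rb*h0 - qa*rc*h2 - qb*ra*h0 + qb*rc*h1 + qc*ra*h2 - qc*rb*h1) * pc +
      (ra*pb*h0 - ra*pc*h2 - rb*pa*h0 + rb*pc*h1 + rc*pa*h2 - rc*pb*h1) * qc +
      (pa*qb*h0 - pa*qc*h2 - pb*qa*h0 + pb*qc*h1 + pc*qa*h2 - pc*qb*h1) * rc := by
      rw [hDdef]; ring
    rw [this, e1, e2, e3]; ring
  exact ⟨by rcases mul_eq_zero.mp k0 with h | h; exact absurd h hD; exact h,
         by rcases mul_eq_zero.mp k1 with h | h; exact absurd h hD; exact h,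
         by rcases mul_eq_zero.mp k2 with h | h; exact absurd h hD; exact h⟩

/-- Main estimate: a nonzero integer determinant of two linear-form rows and the h-row
yields the key inequality `1 ≤ 2P|Λ| + 4HQ`. -/
private lemma bridge (g₁ g₂ : ℝ) (xa xb xc ya yb yc h1 h2 h0 : ℤ)
    (P1 P2 Q1 Q2 P Q H : ℝ)
    (hd : xa*yb*h0 - xa*yc*h2 - xb*ya*h0 + xb*yc*h1 + xc*ya*h2 - xc*yb*h1 ≠ 0)
    (hxa : |(xa:ℝ)| ≤ P1) (hxb : |(xb:ℝ)| ≤ P1)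
    (hya : |(ya:ℝ)| ≤ P2) (hyb : |(yb:ℝ)| ≤ P2)
    (hRx : |(xa:ℝ)*g₁ + (xb:ℝ)*g₂ + (xc:ℝ)| ≤ Q1)
    (hRy : |(ya:ℝ)*g₁ + (yb:ℝ)*g₂ + (yc:ℝ)| ≤ Q2)
    (hh1 : |(h1:ℝ)| ≤ H) (hh2 : |(h2:ℝ)| ≤ H)
    (hPP : P1*P2 ≤ P) (hPQ : P1*Q2 ≤ Q) (hQP : P2*Q1 ≤ Q) :
    1 ≤ 2*P*|(h0:ℝ) + (h1:ℝ)*g₁ + (h2:ℝ)*g₂| + 4*H*Q := by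
  set Λ : ℝ := (h0:ℝ) + (h1:ℝ)*g₁ + (h2:ℝ)*g₂ with hΛ
  set Rx : ℝ := (xa:ℝ)*g₁ + (xb:ℝ)*g₂ + (xc:ℝ) with hRxd
  set Ry : ℝ := (ya:ℝ)*g₁ + (yb:ℝ)*g₂ + (yc:ℝ) with hRyd
  have hint : (1:ℝ) ≤ |((xa*yb*h0 - xa*yc*h2 - xb*ya*h0 + xb*yc*h1 + xc*ya*h2 - xc*yb*h1 : ℤ) : ℝ)| := by
    rw [← Int.cast_abs]
    exact_mod_cast Int.one_le_abs hd
  have hidd : ((xa*yb*h0 - xa*yc*h2 - xb*ya*h0 + xb*yc*h1 + xc*ya*h2 - xc*yb*h1 : ℤ) : ℝ)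
      = (xa:ℝ)*(yb:ℝ)*Λ - (xa:ℝ)*Ry*(h2:ℝ) - (xb:ℝ)*(ya:ℝ)*Λ + (xb:ℝ)*Ry*(h1:ℝ)
        + Rx*(ya:ℝ)*(h2:ℝ) - Rx*(yb:ℝ)*(h1:ℝ) := by
    rw [hΛ, hRxd, hRyd]; push_cast; ring
  rw [hidd] at hint
  have hP1 : 0 ≤ P1 := (abs_nonneg _).trans hxa
  have hP2 : 0 ≤ P2 := (abs_nonneg _).trans hya
  have hQ1 : 0 ≤ Q1 := (abs_nonneg _).trans hRx
  have hQ2 : 0 ≤ Q2 := (abs_nonneg _).trans hRy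
  have hH : 0 ≤ H := (abs_nonneg _).trans hh1
  have habs := abs_six' ((xa:ℝ)*(yb:ℝ)*Λ) ((xa:ℝ)*Ry*(h2:ℝ)) ((xb:ℝ)*(ya:ℝ)*Λ)
      ((xb:ℝ)*Ry*(h1:ℝ)) (Rx*(ya:ℝ)*(h2:ℝ)) (Rx*(yb:ℝ)*(h1:ℝ))
  have t1 : |(xa:ℝ)*(yb:ℝ)*Λ| ≤ P1*P2*|Λ| := by
    rw [abs_mul, abs_mul]; gcongr
  have t2 : |(xa:ℝ)*Ry*(h2:ℝ)| ≤ P1*Q2*H := by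
    rw [abs_mul, abs_mul]; gcongr
  have t3 : |(xb:ℝ)*(ya:ℝ)*Λ| ≤ P1*P2*|Λ| := by
    rw [abs_mul, abs_mul]; gcongr
  have t4 : |(xb:ℝ)*Ry*(h1:ℝ)| ≤ P1*Q2*H := by
    rw [abs_mul, abs_mul]; gcongr
  have t5 : |Rx*(ya:ℝ)*(h2:ℝ)| ≤ P2*Q1*H := by
    rw [abs_mul, abs_mul]
    calc |Rx| * |(ya:ℝ)| * |(h2:ℝ)| ≤ Q1*P2*H := by gcongr
    _ = P2*Q1*H := by ring
  have t6 : |Rx*(yb:ℝ)*(h1:ℝ)| ≤ P2*Q1*H := by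
    rw [abs_mul, abs_mul]
    calc |Rx| * |(yb:ℝ)| * |(h1:ℝ)| ≤ Q1*P2*H := by gcongr
    _ = P2*Q1*H := by ring
  have u1 : P1*P2*|Λ| ≤ P*|Λ| := mul_le_mul_of_nonneg_right hPP (abs_nonneg _)
  have u2 : P1*Q2*H ≤ Q*H := mul_le_mul_of_nonneg_right hPQ hH
  have u3 : P2*Q1*H ≤ Q*H := mul_le_mul_of_nonneg_right hQP hH
  linarith

/-- Estimate without an h-row, used to show θ(0) ≥ 0. -/
private lemma bridge0 (g₁ g₂ : ℝ) (xa xb xc ya yb yc za zb zc : ℤ)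
    (P1 P2 P3 Q1 Q2 Q3 T : ℝ)
    (hd : xa*yb*zc - xa*yc*zb - xb*ya*zc + xb*yc*za + xc*ya*zb - xc*yb*za ≠ 0)
    (hxa : |(xa:ℝ)| ≤ P1) (hxb : |(xb:ℝ)| ≤ P1)
    (hya : |(ya:ℝ)| ≤ P2) (hyb : |(yb:ℝ)| ≤ P2)
    (hza : |(za:ℝ)| ≤ P3) (hzb : |(zb:ℝ)| ≤ P3)
    (hRx : |(xa:ℝ)*g₁ + (xb:ℝ)*g₂ + (xc:ℝ)| ≤ Q1)
    (hRy : |(ya:ℝ)*g₁ + (yb:ℝ)*g₂ + (yc:ℝ)| ≤ Q2)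
    (hRz : |(za:ℝ)*g₁ + (zb:ℝ)*g₂ + (zc:ℝ)| ≤ Q3)
    (hT1 : P1*P2*Q3 ≤ T) (hT2 : P1*P3*Q2 ≤ T) (hT3 : P2*P3*Q1 ≤ T) :
    1 ≤ 6*T := by
  set Rx : ℝ := (xa:ℝ)*g₁ + (xb:ℝ)*g₂ + (xc:ℝ) with hRxd
  set Ry : ℝ := (ya:ℝ)*g₁ + (yb:ℝ)*g₂ + (yc:ℝ) with hRyd
  set Rz : ℝ := (za:ℝ)*g₁ + (zb:ℝ)*g₂ + (zc:ℝ) with hRzd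
  have hint : (1:ℝ) ≤ |((xa*yb*zc - xa*yc*zb - xb*ya*zc + xb*yc*za + xc*ya*zb - xc*yb*za : ℤ) : ℝ)| := by
    rw [← Int.cast_abs]
    exact_mod_cast Int.one_le_abs hd
  have hidd : ((xa*yb*zc - xa*yc*zb - xb*ya*zc + xb*yc*za + xc*ya*zb - xc*yb*za : ℤ) : ℝ)
      = (xa:ℝ)*(yb:ℝ)*Rz - (xa:ℝ)*Ry*(zb:ℝ) - (xb:ℝ)*(ya:ℝ)*Rz + (xb:ℝ)*Ry*(za:ℝ)
        + Rx*(ya:ℝ)*(zb:ℝ) - Rx*(yb:ℝ)*(za:ℝ) := by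
    rw [hRxd, hRyd, hRzd]; push_cast; ring
  rw [hidd] at hint
  have hP1 : 0 ≤ P1 := (abs_nonneg _).trans hxa
  have hP2 : 0 ≤ P2 := (abs_nonneg _).trans hya
  have hP3 : 0 ≤ P3 := (abs_nonneg _).trans hza
  have hQ1 : 0 ≤ Q1 := (abs_nonneg _).trans hRx
  have hQ2 : 0 ≤ Q2 := (abs_nonneg _).trans hRy
  have habs := abs_six' ((xa:ℝ)*(yb:ℝ)*Rz) ((xa:ℝ)*Ry*(zb:ℝ)) ((xb:ℝ)*(ya:ℝ)*Rz)
      ((xb:ℝ)*Ry*(za:ℝ)) (Rx*(ya:ℝ)*(zb:ℝ)) (Rx*(yb:ℝ)*(za:ℝ))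
  have t1 : |(xa:ℝ)*(yb:ℝ)*Rz| ≤ P1*P2*Q3 := by rw [abs_mul, abs_mul]; gcongr
  have t2 : |(xa:ℝ)*Ry*(zb:ℝ)| ≤ P1*P3*Q2 := by
    rw [abs_mul, abs_mul]
    calc |(xa:ℝ)| * |Ry| * |(zb:ℝ)| ≤ P1*Q2*P3 := by gcongr
    _ = P1*P3*Q2 := by ring
  have t3 : |(xb:ℝ)*(ya:ℝ)*Rz| ≤ P1*P2*Q3 := by rw [abs_mul, abs_mul]; gcongr
  have t4 : |(xb:ℝ)*Ry*(za:ℝ)| ≤ P1*P3*Q2 := by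
    rw [abs_mul, abs_mul]
    calc |(xb:ℝ)| * |Ry| * |(za:ℝ)| ≤ P1*Q2*P3 := by gcongr
    _ = P1*P3*Q2 := by ring
  have t5 : |Rx*(ya:ℝ)*(zb:ℝ)| ≤ P2*P3*Q1 := by
    rw [abs_mul, abs_mul]
    calc |Rx| * |(ya:ℝ)| * |(zb:ℝ)| ≤ Q1*P2*P3 := by gcongr
    _ = P2*P3*Q1 := by ring
  have t6 : |Rx*(yb:ℝ)*(za:ℝ)| ≤ P2*P3*Q1 := by
    rw [abs_mul, abs_mul]
    calc |Rx| * |(yb:ℝ)| * |(za:ℝ)| ≤ Q1*P2*P3 := by gcongr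
    _ = P2*P3*Q1 := by ring
  linarith

set_option maxHeartbeats 1000000 in
/-- Fundamental Lemma: good dense sequences of linear forms with nonvanishing
determinants yield a linear independence measure with exponent
`μ = max_ℓ θ(ℓ+1)/ν(ℓ)`. -/
theorem fundamental_lemma (g₁ g₂ : ℝ) (b d L m₀ : ℕ)
    (hb : 2 ≤ b) (hd : 2 ≤ d) (hL : 0 < L)
    (a bb c : ℕ → Fin 3 → ℕ → ℤ) (E V : ℕ → Fin 3 → ℝ) (c₁ c₂ : ℝ)
    (hc₁ : 0 < c₁) (hc₂ : 0 < c₂)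
    (hV : ∀ ℓ < L, ∀ i, 0 < V ℓ i)
    (hcoeff : ∀ ℓ < L, ∀ i, ∀ m, m₀ ≤ m →
      max |(a ℓ i m : ℝ)| |(bb ℓ i m : ℝ)| ≤ c₁ * (b : ℝ) ^ (E ℓ i * (d : ℝ) ^ m))
    (hrem : ∀ ℓ < L, ∀ i, ∀ m, m₀ ≤ m →
      |(a ℓ i m : ℝ) * g₁ + (bb ℓ i m : ℝ) * g₂ + (c ℓ i m : ℝ)| ≤
        c₂ * (b : ℝ) ^ (-(V ℓ i) * (d : ℝ) ^ m))
    (hdet : ∀ ℓ < L, ∀ m, m₀ ≤ m →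
      Matrix.det ![![a ℓ 0 m, bb ℓ 0 m, c ℓ 0 m],
                   ![a ℓ 1 m, bb ℓ 1 m, c ℓ 1 m],
                   ![a ℓ 2 m, bb ℓ 2 m, c ℓ 2 m]] ≠ 0)
    (θ ν : ℕ → ℝ)
    (hθ : ∀ ℓ < L, θ ℓ = max (E ℓ 0 + E ℓ 1) (max (E ℓ 0 + E ℓ 2) (E ℓ 1 + E ℓ 2)))
    (hθL : θ L = d * θ 0)
    (hν : ∀ ℓ < L, ν ℓ = min (V ℓ 0 - E ℓ 1) (min (V ℓ 0 - E ℓ 2)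
        (min (V ℓ 1 - E ℓ 0) (min (V ℓ 1 - E ℓ 2) (min (V ℓ 2 - E ℓ 0) (V ℓ 2 - E ℓ 1))))))
    (hν0 : 0 < ν 0)
    (hνmono : ∀ ℓ ℓ', ℓ < ℓ' → ℓ' < L → ν ℓ < ν ℓ')
    (hνL : ν (L - 1) < d * ν 0)
    (μ : ℝ) (hμ : μ = ⨆ ℓ : Fin L, θ (ℓ.1 + 1) / ν ℓ.1) :
    ∃ C H₀ : ℝ, 0 < C ∧ 0 < H₀ ∧
      ∀ h₀ h₁ h₂ : ℤ, ¬(h₀ = 0 ∧ h₁ = 0 ∧ h₂ = 0) →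
        C * (max (max |(h₁ : ℝ)| |(h₂ : ℝ)|) H₀) ^ (-μ) <
          |(h₀ : ℝ) + (h₁ : ℝ) * g₁ + (h₂ : ℝ) * g₂| := by
  classical
  have hb2 : (2:ℝ) ≤ (b:ℝ) := by exact_mod_cast hb
  have hBpos : (0:ℝ) < (b:ℝ) := by linarith
  have hB1 : (1:ℝ) < (b:ℝ) := by linarith
  have hBne : (b:ℝ) ≠ 1 := ne_of_gt hB1
  have hd2 : (2:ℝ) ≤ (d:ℝ) := by exact_mod_cast hd
  have hd1 : (1:ℝ) < (d:ℝ) := by linarith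
  have hdpos : (0:ℝ) < (d:ℝ) := by linarith
  have hL1 : L - 1 < L := by omega
  have hLsucc : L - 1 + 1 = L := by omega
  have hνpos : ∀ ℓ, ℓ < L → 0 < ν ℓ := by
    intro ℓ hℓ
    rcases Nat.eq_zero_or_pos ℓ with h0 | hpos
    · rw [h0]; exact hν0
    · exact hν0.trans (hνmono 0 ℓ hpos hℓ)
  have hμge : ∀ ℓ, ℓ < L → θ (ℓ+1) ≤ μ * ν ℓ := by
    intro ℓ hℓ
    have hle : θ (ℓ+1) / ν ℓ ≤ μ := by
      rw [hμ]
      exact le_ciSup (f := fun ℓ : Fin L => θ (ℓ.1 + 1) / ν ℓ.1)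
        (Finite.bddAbove_range _) (⟨ℓ, hℓ⟩ : Fin L)
    have hp := hνpos ℓ hℓ
    calc θ (ℓ+1) = (θ (ℓ+1) / ν ℓ) * ν ℓ := (div_mul_cancel₀ _ hp.ne').symm
    _ ≤ μ * ν ℓ := mul_le_mul_of_nonneg_right hle hp.le
  -- pair bounds hold for all ℓ < L
  have pairθ : ∀ ℓ, ℓ < L → ∀ i j : Fin 3, i ≠ j → E ℓ i + E ℓ j ≤ θ ℓ := by
    intro ℓ hℓ i j hij
    rw [hθ ℓ hℓ]
    fin_cases i <;> fin_cases j <;>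
      first
        | exact absurd rfl hij
        | exact le_max_left _ _
        | exact le_trans (le_max_left _ _) (le_max_right _ _)
        | exact le_trans (le_max_right _ _) (le_max_right _ _)
        | (rw [add_comm]
           first
            | exact le_max_left _ _
            | exact le_trans (le_max_left _ _) (le_max_right _ _)
            | exact le_trans (le_max_right _ _) (le_max_right _ _))
  have pairν : ∀ ℓ, ℓ < L → ∀ i j : Fin 3, i ≠ j → ν ℓ ≤ V ℓ j - E ℓ i := by
    intro ℓ hℓ i j hij
    rw [hν ℓ hℓ]
    fin_cases i <;> fin_cases j <;>
      first
        | exact absurd rfl hij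
        | exact min_le_left _ _
        | exact le_trans (min_le_right _ _) (min_le_left _ _)
        | exact le_trans (min_le_right _ _) (le_trans (min_le_right _ _) (min_le_left _ _))
        | exact le_trans (min_le_right _ _) (le_trans (min_le_right _ _)
            (le_trans (min_le_right _ _) (min_le_left _ _)))
        | exact le_trans (min_le_right _ _) (le_trans (min_le_right _ _)
            (le_trans (min_le_right _ _) (le_trans (min_le_right _ _) (min_le_left _ _))))
        | exact le_trans (min_le_right _ _) (le_trans (min_le_right _ _)
            (le_trans (min_le_right _ _) (le_trans (min_le_right _ _) (min_le_right _ _))))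
  -- θ 0 is nonnegative
  have hθ0 : 0 ≤ θ 0 := by
    by_contra hneg
    push_neg at hneg
    set K := 6 * (c₁^2 * c₂) with hK
    have hKpos : 0 < K := by
      rw [hK]
      exact mul_pos (by norm_num : (0:ℝ) < 6) (mul_pos (pow_pos hc₁ 2) hc₂)
    set s := logb (b:ℝ) (1/K) with hs
    obtain ⟨n, hn⟩ := pow_unbounded_of_one_lt ((|s| + 1) / (-θ 0)) hd1
    set m := max n m₀ with hm
    have hmm₀ : m₀ ≤ m := le_max_right _ _
    have hdn : ((d:ℝ))^n ≤ ((d:ℝ))^m := pow_le_pow_right₀ hd1.le (le_max_left _ _)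
    have hexp : θ 0 * (d:ℝ)^m < s := by
      have h1 : (|s| + 1) / (-θ 0) < (d:ℝ)^m := lt_of_lt_of_le hn hdn
      rw [div_lt_iff₀ (by linarith)] at h1
      have h2 := neg_abs_le s
      nlinarith [h1, h2]
    have hsmall : (b:ℝ) ^ (θ 0 * (d:ℝ)^m) < 1/K :=
      (Real.lt_logb_iff_rpow_lt hB1 (one_div_pos.mpr hKpos)).mp hexp
    -- determinant bound
    have hd3 := hdet 0 hL m hmm₀
    erw [Matrix.det_fin_three] at hd3
    simp only [Matrix.cons_val', Matrix.cons_val_zero, Matrix.cons_val_one, Matrix.head_cons,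
      Matrix.empty_val', Matrix.cons_val_fin_one, Matrix.head_fin_const, Matrix.cons_val_two,
      Matrix.tail_cons] at hd3
    set Dm := (d:ℝ)^m with hDm
    have hDm0 : (0:ℝ) ≤ Dm := by rw [hDm]; positivity
    have hA : ∀ i : Fin 3, |((a 0 i m : ℤ):ℝ)| ≤ c₁ * (b:ℝ)^(E 0 i * Dm) :=
      fun i => le_trans (le_max_left _ _) (hcoeff 0 hL i m hmm₀)
    have hBb : ∀ i : Fin 3, |((bb 0 i m : ℤ):ℝ)| ≤ c₁ * (b:ℝ)^(E 0 i * Dm) :=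
      fun i => le_trans (le_max_right _ _) (hcoeff 0 hL i m hmm₀)
    have hR : ∀ i : Fin 3, |((a 0 i m : ℤ):ℝ)*g₁ + ((bb 0 i m : ℤ):ℝ)*g₂ + ((c 0 i m : ℤ):ℝ)| ≤ c₂ :=
      by
      intro i
      refine le_trans (hrem 0 hL i m hmm₀) ?_
      have hone : (b:ℝ)^(-(V 0 i) * Dm) ≤ 1 := by
        apply Real.rpow_le_one_of_one_le_of_nonpos hB1.le
        have hVp := hV 0 hL i
        have : -(V 0 i) ≤ 0 := by linarith
        exact mul_nonpos_iff.mpr (Or.inr ⟨this, hDm0⟩)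
      calc c₂ * (b:ℝ)^(-(V 0 i) * Dm) ≤ c₂ * 1 :=
            mul_le_mul_of_nonneg_left hone hc₂.le
        _ = c₂ := mul_one _
    have hprod : ∀ i j : Fin 3, i ≠ j →
        (c₁ * (b:ℝ)^(E 0 i * Dm)) * (c₁ * (b:ℝ)^(E 0 j * Dm)) * c₂
          ≤ c₁^2 * c₂ * (b:ℝ)^(θ 0 * Dm) := by
      intro i j hij
      have he : (b:ℝ)^(E 0 i * Dm) * (b:ℝ)^(E 0 j * Dm) = (b:ℝ)^((E 0 i + E 0 j) * Dm) := by
        rw [← Real.rpow_add hBpos, ← add_mul]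
      have hmono : (b:ℝ)^((E 0 i + E 0 j) * Dm) ≤ (b:ℝ)^(θ 0 * Dm) :=
        Real.rpow_le_rpow_of_exponent_le hB1.le
          (mul_le_mul_of_nonneg_right (pairθ 0 hL i j hij) hDm0)
      calc (c₁ * (b:ℝ)^(E 0 i * Dm)) * (c₁ * (b:ℝ)^(E 0 j * Dm)) * c₂
          = c₁^2 * c₂ * ((b:ℝ)^(E 0 i * Dm) * (b:ℝ)^(E 0 j * Dm)) := by ring
        _ = c₁^2 * c₂ * (b:ℝ)^((E 0 i + E 0 j) * Dm) := by rw [he]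
        _ ≤ c₁^2 * c₂ * (b:ℝ)^(θ 0 * Dm) := by
            have hpos : (0:ℝ) ≤ c₁^2 * c₂ := (mul_pos (pow_pos hc₁ 2) hc₂).le
            exact mul_le_mul_of_nonneg_left hmono hpos
    have hbig : (1:ℝ) ≤ 6 * (c₁^2 * c₂ * (b:ℝ)^(θ 0 * Dm)) := by
      refine bridge0 g₁ g₂ (a 0 0 m) (bb 0 0 m) (c 0 0 m) (a 0 1 m) (bb 0 1 m) (c 0 1 m)
        (a 0 2 m) (bb 0 2 m) (c 0 2 m)
        (c₁ * (b:ℝ)^(E 0 0 * Dm)) (c₁ * (b:ℝ)^(E 0 1 * Dm)) (c₁ * (b:ℝ)^(E 0 2 * Dm))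
        c₂ c₂ c₂ (c₁^2 * c₂ * (b:ℝ)^(θ 0 * Dm)) hd3
        (hA 0) (hBb 0) (hA 1) (hBb 1) (hA 2) (hBb 2) (hR 0) (hR 1) (hR 2)
        (hprod 0 1 (by decide)) (hprod 0 2 (by decide)) (hprod 1 2 (by decide))
    have : K * (b:ℝ)^(θ 0 * Dm) < K * (1/K) :=
      mul_lt_mul_of_pos_left hsmall hKpos
    rw [mul_one_div_cancel (ne_of_gt hKpos)] at this
    rw [hK] at this
    linarith
  have hθLnn : 0 ≤ θ L := by
    rw [hθL]
    exact mul_nonneg hdpos.le hθ0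
  have hμ0 : 0 ≤ μ := by
    have h := hμge (L-1) hL1
    rw [hLsucc] at h
    have hp := hνpos (L-1) hL1
    by_contra hcon
    push_neg at hcon
    have hneg : μ * ν (L-1) < 0 := mul_neg_of_neg_of_pos hcon hp
    linarith
  -- constants
  have h8 : (0:ℝ) < 8*c₁*c₂ := mul_pos (mul_pos (by norm_num : (0:ℝ) < 8) hc₁) hc₂
  have hc₁2 : (0:ℝ) < c₁^2 := pow_pos hc₁ 2
  have h8c : (0:ℝ) < 8*c₁^2 := mul_pos (by norm_num : (0:ℝ) < 8) hc₁2
  refine ⟨(8*c₁*c₂)^(-μ) / (8*c₁^2),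
    max 1 ((b:ℝ) ^ (ν (L-1) * (d:ℝ)^(m₀+1)) / (8*c₁*c₂)),
    div_pos (Real.rpow_pos_of_pos h8 _) h8c, 
    lt_of_lt_of_le one_pos (le_max_left _ _), ?_⟩
  intro h₀ h₁ h₂ hh
  set C := (8*c₁*c₂)^(-μ) / (8*c₁^2) with hC
  set H₀ := max 1 ((b:ℝ) ^ (ν (L-1) * (d:ℝ)^(m₀+1)) / (8*c₁*c₂)) with hH₀
  set H' := max (max |(h₁:ℝ)| |(h₂:ℝ)|) H₀ with hH'
  have hH'1 : (1:ℝ) ≤ H' := le_trans (le_max_left _ _) (le_max_right _ H₀)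
  have hH'pos : (0:ℝ) < H' := by linarith
  set t := logb (b:ℝ) (8*c₁*c₂*H') with ht
  have h8H : (0:ℝ) < 8*c₁*c₂*H' := mul_pos h8 hH'pos
  have hBt : (b:ℝ) ^ t = 8*c₁*c₂*H' := Real.rpow_logb hBpos hBne h8H
  have htlb : ν (L-1) * (d:ℝ)^(m₀+1) ≤ t := by
    rw [ht, Real.le_logb_iff_rpow_le hB1 h8H]
    have h1 : (b:ℝ)^(ν (L-1) * (d:ℝ)^(m₀+1)) / (8*c₁*c₂) ≤ H₀ := le_max_right _ _
    have h2 : H₀ ≤ H' := le_max_right _ _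
    calc (b:ℝ)^(ν (L-1) * (d:ℝ)^(m₀+1))
        = 8*c₁*c₂ * ((b:ℝ)^(ν (L-1) * (d:ℝ)^(m₀+1)) / (8*c₁*c₂)) := by
          rw [mul_comm (8*c₁*c₂) ((b:ℝ)^(ν (L-1) * (d:ℝ)^(m₀+1)) / (8*c₁*c₂)),
            div_mul_cancel₀ _ h8.ne']
      _ ≤ 8*c₁*c₂ * H₀ := mul_le_mul_of_nonneg_left h1 h8.le
      _ ≤ 8*c₁*c₂ * H' := mul_le_mul_of_nonneg_left h2 h8.le
  have hνL1 := hνpos (L-1) hL1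
  have htpos : 0 < t :=
    lt_of_lt_of_le (mul_pos hνL1 (pow_pos hdpos _)) htlb
  -- choose m minimal with m₀+1 ≤ m and t ≤ ν (L-1) * d^m
  have hex : ∃ m, m₀ + 1 ≤ m ∧ t ≤ ν (L-1) * (d:ℝ)^m := by
    obtain ⟨n, hn⟩ := pow_unbounded_of_one_lt (t / ν (L-1)) hd1
    refine ⟨max n (m₀+1), le_max_right _ _, ?_⟩
    have h1 : t / ν (L-1) < (d:ℝ)^(max n (m₀+1)) :=
      hn.trans_le (pow_le_pow_right₀ hd1.le (le_max_left _ _))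
    rw [div_lt_iff₀ hνL1, mul_comm] at h1
    linarith
  set m := Nat.find hex with hmdef
  obtain ⟨hm1, hm2⟩ := Nat.find_spec hex
  have hmm₀ : m₀ ≤ m := by omega
  have hprev : ν (L-1) * (d:ℝ)^(m-1) < t := by
    rcases eq_or_lt_of_le hm1 with he | hlt
    · have hq : m - 1 = m₀ := by omega
      rw [hq]
      have hgt : ν (L-1) * (d:ℝ)^(m₀+1) = (d:ℝ) * (ν (L-1) * (d:ℝ)^m₀) := by ring
      have hp : 0 < ν (L-1) * (d:ℝ)^m₀ := mul_pos hνL1 (pow_pos hdpos _)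
      have hstep : (1:ℝ) * (ν (L-1) * (d:ℝ)^m₀) < (d:ℝ) * (ν (L-1) * (d:ℝ)^m₀) :=
        mul_lt_mul_of_pos_right (by linarith) hp
      linarith
    · have hnot := Nat.find_min hex (show m - 1 < m by omega)
      simp only [not_and, not_le] at hnot
      exact hnot (by omega)
  -- choose ℓ minimal with ℓ < L and t ≤ ν ℓ * d^m
  have hexl : ∃ ℓ, ℓ < L ∧ t ≤ ν ℓ * (d:ℝ)^m := ⟨L-1, hL1, hm2⟩
  set ℓ := Nat.find hexl with hℓdef
  obtain ⟨hℓL, hℓt⟩ := Nat.find_spec hexl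
  -- key exponent bound
  have hkey : θ ℓ * (d:ℝ)^m ≤ μ * t := by
    rcases Nat.eq_zero_or_pos ℓ with hℓ0 | hℓpos
    · have hmsplit : (d:ℝ)^m = (d:ℝ)^(m-1) * (d:ℝ) := by
        rw [← pow_succ]
        congr 1
        omega
      have hμL := hμge (L-1) hL1
      rw [hLsucc] at hμL
      have e1 : θ ℓ * (d:ℝ)^m = θ L * (d:ℝ)^(m-1) := by
        rw [hℓ0, hθL, hmsplit]; ring
      have hp : (0:ℝ) ≤ (d:ℝ)^(m-1) := by positivity
      calc θ ℓ * (d:ℝ)^m = θ L * (d:ℝ)^(m-1) := e1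
        _ ≤ (μ * ν (L-1)) * (d:ℝ)^(m-1) := mul_le_mul_of_nonneg_right hμL hp
        _ = μ * (ν (L-1) * (d:ℝ)^(m-1)) := by ring
        _ ≤ μ * t := mul_le_mul_of_nonneg_left hprev.le hμ0
    · have hnot := Nat.find_min hexl (show ℓ - 1 < ℓ by omega)
      simp only [not_and, not_le] at hnot
      have hlt : ν (ℓ-1) * (d:ℝ)^m < t := hnot (by omega)
      have hμl := hμge (ℓ-1) (by omega)
      rw [show ℓ-1+1 = ℓ by omega] at hμl
      have hp : (0:ℝ) ≤ (d:ℝ)^m := by positivity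
      calc θ ℓ * (d:ℝ)^m ≤ (μ * ν (ℓ-1)) * (d:ℝ)^m := mul_le_mul_of_nonneg_right hμl hp
        _ = μ * (ν (ℓ-1) * (d:ℝ)^m) := by ring
        _ ≤ μ * t := mul_le_mul_of_nonneg_left hlt.le hμ0
  -- set up the estimate at (ℓ, m)
  set Dm := (d:ℝ)^m with hDm
  have hDm0 : (0:ℝ) ≤ Dm := by rw [hDm]; positivity
  have hA : ∀ i : Fin 3, |((a ℓ i m : ℤ):ℝ)| ≤ c₁ * (b:ℝ)^(E ℓ i * Dm) :=
    fun i => le_trans (le_max_left _ _) (hcoeff ℓ hℓL i m hmm₀)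
  have hBb : ∀ i : Fin 3, |((bb ℓ i m : ℤ):ℝ)| ≤ c₁ * (b:ℝ)^(E ℓ i * Dm) :=
    fun i => le_trans (le_max_right _ _) (hcoeff ℓ hℓL i m hmm₀)
  have hR : ∀ i : Fin 3, |((a ℓ i m : ℤ):ℝ)*g₁ + ((bb ℓ i m : ℤ):ℝ)*g₂ + ((c ℓ i m : ℤ):ℝ)|
      ≤ c₂ * (b:ℝ)^(-(V ℓ i) * Dm) := fun i => hrem ℓ hℓL i m hmm₀
  have hH1 : |(h₁:ℝ)| ≤ H' := le_trans (le_max_left _ _) (le_max_left _ _)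
  have hH2 : |(h₂:ℝ)| ≤ H' := le_trans (le_max_right _ _) (le_max_left _ _)
  set P := c₁^2 * (b:ℝ)^(θ ℓ * Dm) with hPdef
  set Q := c₁*c₂ * (b:ℝ)^(-(ν ℓ) * Dm) with hQdef
  have hPP : ∀ i j : Fin 3, i ≠ j →
      (c₁ * (b:ℝ)^(E ℓ i * Dm)) * (c₁ * (b:ℝ)^(E ℓ j * Dm)) ≤ P := by
    intro i j hij
    have he : (b:ℝ)^(E ℓ i * Dm) * (b:ℝ)^(E ℓ j * Dm) = (b:ℝ)^((E ℓ i + E ℓ j) * Dm) := by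
      rw [← Real.rpow_add hBpos, ← add_mul]
    have hmono : (b:ℝ)^((E ℓ i + E ℓ j) * Dm) ≤ (b:ℝ)^(θ ℓ * Dm) :=
      Real.rpow_le_rpow_of_exponent_le hB1.le
        (mul_le_mul_of_nonneg_right (pairθ ℓ hℓL i j hij) hDm0)
    calc (c₁ * (b:ℝ)^(E ℓ i * Dm)) * (c₁ * (b:ℝ)^(E ℓ j * Dm))
        = c₁^2 * ((b:ℝ)^(E ℓ i * Dm) * (b:ℝ)^(E ℓ j * Dm)) := by ring
      _ = c₁^2 * (b:ℝ)^((E ℓ i + E ℓ j) * Dm) := by rw [he]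
      _ ≤ P := mul_le_mul_of_nonneg_left hmono hc₁2.le
  have hPQ : ∀ i j : Fin 3, i ≠ j →
      (c₁ * (b:ℝ)^(E ℓ i * Dm)) * (c₂ * (b:ℝ)^(-(V ℓ j) * Dm)) ≤ Q := by
    intro i j hij
    have he : (b:ℝ)^(E ℓ i * Dm) * (b:ℝ)^(-(V ℓ j) * Dm)
        = (b:ℝ)^((E ℓ i - V ℓ j) * Dm) := by
      rw [← Real.rpow_add hBpos]
      congr 1
      ring
    have hexp : E ℓ i - V ℓ j ≤ -(ν ℓ) := by
      have := pairν ℓ hℓL i j hij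
      linarith
    have hmono : (b:ℝ)^((E ℓ i - V ℓ j) * Dm) ≤ (b:ℝ)^(-(ν ℓ) * Dm) :=
      Real.rpow_le_rpow_of_exponent_le hB1.le (mul_le_mul_of_nonneg_right hexp hDm0)
    calc (c₁ * (b:ℝ)^(E ℓ i * Dm)) * (c₂ * (b:ℝ)^(-(V ℓ j) * Dm))
        = c₁*c₂ * ((b:ℝ)^(E ℓ i * Dm) * (b:ℝ)^(-(V ℓ j) * Dm)) := by ring
      _ = c₁*c₂ * (b:ℝ)^((E ℓ i - V ℓ j) * Dm) := by rw [he]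
      _ ≤ Q := mul_le_mul_of_nonneg_left hmono (mul_pos hc₁ hc₂).le
  -- nonzero determinant and selection
  have hd3 := hdet ℓ hℓL m hmm₀
  erw [Matrix.det_fin_three] at hd3
  simp only [Matrix.cons_val', Matrix.cons_val_zero, Matrix.cons_val_one, Matrix.head_cons,
    Matrix.empty_val', Matrix.cons_val_fin_one, Matrix.head_fin_const, Matrix.cons_val_two,
    Matrix.tail_cons] at hd3
  have hsel := cramer_sel (a ℓ 0 m) (bb ℓ 0 m) (c ℓ 0 m) (a ℓ 1 m) (bb ℓ 1 m) (c ℓ 1 m)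
    (a ℓ 2 m) (bb ℓ 2 m) (c ℓ 2 m) h₁ h₂ h₀ hd3 hh
  have hest : 1 ≤ 2*P*|(h₀:ℝ) + (h₁:ℝ)*g₁ + (h₂:ℝ)*g₂| + 4*H'*Q := by
    rcases hsel with hcase | hcase | hcase
    · exact bridge g₁ g₂ (a ℓ 1 m) (bb ℓ 1 m) (c ℓ 1 m) (a ℓ 2 m) (bb ℓ 2 m) (c ℓ 2 m)
        h₁ h₂ h₀ _ _ _ _ P Q H' hcase (hA 1) (hBb 1) (hA 2) (hBb 2) (hR 1) (hR 2) hH1 hH2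
        (hPP 1 2 (by decide)) (hPQ 1 2 (by decide)) (hPQ 2 1 (by decide))
    · exact bridge g₁ g₂ (a ℓ 2 m) (bb ℓ 2 m) (c ℓ 2 m) (a ℓ 0 m) (bb ℓ 0 m) (c ℓ 0 m)
        h₁ h₂ h₀ _ _ _ _ P Q H' hcase (hA 2) (hBb 2) (hA 0) (hBb 0) (hR 2) (hR 0) hH1 hH2
        (hPP 2 0 (by decide)) (hPQ 2 0 (by decide)) (hPQ 0 2 (by decide))
    · exact bridge g₁ g₂ (a ℓ 0 m) (bb ℓ 0 m) (c ℓ 0 m) (a ℓ 1 m) (bb ℓ 1 m) (c ℓ 1 m)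
        h₁ h₂ h₀ _ _ _ _ P Q H' hcase (hA 0) (hBb 0) (hA 1) (hBb 1) (hR 0) (hR 1) hH1 hH2
        (hPP 0 1 (by decide)) (hPQ 0 1 (by decide)) (hPQ 1 0 (by decide))
  -- numerical conclusion
  set Λ := |(h₀:ℝ) + (h₁:ℝ)*g₁ + (h₂:ℝ)*g₂| with hΛdef
  have hQle : (b:ℝ)^(-(ν ℓ) * Dm) ≤ (8*c₁*c₂*H')⁻¹ := by
    have h1 : (b:ℝ)^(-(ν ℓ) * Dm) ≤ (b:ℝ)^(-t) :=
      Real.rpow_le_rpow_of_exponent_le hB1.le (by linarith [hℓt])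
    rwa [Real.rpow_neg hBpos.le, hBt] at h1
  have hQhalf : 4*H'*Q ≤ 1/2 := by
    have h1 : 4*H'*Q ≤ 4*H'*(c₁*c₂*(8*c₁*c₂*H')⁻¹) := by
      rw [hQdef]
      have h0 := mul_le_mul_of_nonneg_left hQle (mul_pos hc₁ hc₂).le
      exact mul_le_mul_of_nonneg_left h0 (by linarith : (0:ℝ) ≤ 4*H')
    have h2 : 4*H'*(c₁*c₂*(8*c₁*c₂*H')⁻¹) = 1/2 := by
      field_simp [hc₁.ne', hc₂.ne', hH'pos.ne']
      ring
    linarith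
  have hPpos : 0 < P := mul_pos hc₁2 (Real.rpow_pos_of_pos hBpos _)
  have hΛlb : (1/2)/(2*P) ≤ Λ := by
    rw [div_le_iff₀ (by linarith : (0:ℝ) < 2*P)]
    linarith [hest, hQhalf]
  -- compare P with the target
  set X := (8*c₁*c₂)^μ with hX
  set Y := H'^μ with hY
  have hXpos : 0 < X := Real.rpow_pos_of_pos h8 _
  have hYpos : 0 < Y := Real.rpow_pos_of_pos hH'pos _
  have hBμt : (b:ℝ)^(μ*t) = X * Y := by
    rw [mul_comm μ t, Real.rpow_mul hBpos.le, hBt, hX, hY,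
      Real.mul_rpow h8.le hH'pos.le]
  have hPle : P ≤ c₁^2 * (X*Y) := by
    rw [hPdef, ← hBμt]
    exact mul_le_mul_of_nonneg_left (Real.rpow_le_rpow_of_exponent_le hB1.le hkey) hc₁2.le
  have hmid : (1/2)/(2*(c₁^2*(X*Y))) ≤ (1/2)/(2*P) := by
    apply div_le_div_of_nonneg_left (by norm_num) (by linarith : (0:ℝ) < 2*P)
    linarith
  have hCeq : C * H'^(-μ) = 1/(8*c₁^2*(X*Y)) := by
    rw [hC, Real.rpow_neg hH'pos.le, Real.rpow_neg h8.le, ← hY, ← hX]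
    field_simp [hXpos.ne', hYpos.ne', hc₁.ne']
  have hfin : C * H'^(-μ) < (1/2)/(2*(c₁^2*(X*Y))) := by
    have hM : (0:ℝ) < c₁^2*(X*Y) := mul_pos hc₁2 (mul_pos hXpos hYpos)
    rw [hCeq]
    have e2 : (1/2)/(2*(c₁^2*(X*Y))) = 1/(4*(c₁^2*(X*Y))) := by ring
    have e3 : 8*c₁^2*(X*Y) = 8*(c₁^2*(X*Y)) := by ring
    rw [e2, e3]
    exact one_div_lt_one_div_of_lt (by linarith) (by linarith)
  calc C * H'^(-μ) < (1/2)/(2*(c₁^2*(X*Y))) := hfin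
    _ ≤ (1/2)/(2*P) := hmid
    _ ≤ Λ := hΛlb
end

section
/- Let Λ = h₀ + h₁γ₁ + h₂γ₂ with integers h₀,h₁,h₂, and suppose two integer linear forms a_i γ₁ + b_i γ₂ + c_i = r_i (i = 1,2) are such that the 3×3 integer determinant with rows (h₁, h₂, h₀), (a₁, b₁, c₁), (a₂, b₂, c₂) is nonzero. Then 1 ≤ 2|Λ|·M₁M₂ + 2h·M₂|r₁| + 2h·M₁|r₂|, where M_i = max{|a_i|, |b_i|} and h = max{|h₁|, |h₂|}. -/
/-- Key step of the fundamental lemma: a nonzero integer determinant gives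
`1 ≤ 2|Λ|M₁M₂ + 2hM₂|r₁| + 2hM₁|r₂|`. -/
theorem key_determinant_bound (g₁ g₂ : ℝ) (h₀ h₁ h₂ a₁ b₁ c₁ a₂ b₂ c₂ : ℤ)
    (hdet : Matrix.det ![![h₁, h₂, h₀], ![a₁, b₁, c₁], ![a₂, b₂, c₂]] ≠ 0) :
    1 ≤ 2 * |(h₀ : ℝ) + (h₁ : ℝ) * g₁ + (h₂ : ℝ) * g₂| *
          (max |(a₁ : ℝ)| |(b₁ : ℝ)|) * (max |(a₂ : ℝ)| |(b₂ : ℝ)|) +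
        2 * (max |(h₁ : ℝ)| |(h₂ : ℝ)|) * (max |(a₂ : ℝ)| |(b₂ : ℝ)|) *
          |(a₁ : ℝ) * g₁ + (b₁ : ℝ) * g₂ + (c₁ : ℝ)| +
        2 * (max |(h₁ : ℝ)| |(h₂ : ℝ)|) * (max |(a₁ : ℝ)| |(b₁ : ℝ)|) *
          |(a₂ : ℝ) * g₁ + (b₂ : ℝ) * g₂ + (c₂ : ℝ)| := by
  set Λ : ℝ := (h₀ : ℝ) + (h₁ : ℝ) * g₁ + (h₂ : ℝ) * g₂ with hΛ
  set r₁ : ℝ := (a₁ : ℝ) * g₁ + (b₁ : ℝ) * g₂ + (c₁ : ℝ) with hr₁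
  set r₂ : ℝ := (a₂ : ℝ) * g₁ + (b₂ : ℝ) * g₂ + (c₂ : ℝ) with hr₂
  set M₁ : ℝ := max |(a₁ : ℝ)| |(b₁ : ℝ)| with hM₁
  set M₂ : ℝ := max |(a₂ : ℝ)| |(b₂ : ℝ)| with hM₂
  set H : ℝ := max |(h₁ : ℝ)| |(h₂ : ℝ)| with hH
  rw [Matrix.det_fin_three ![![h₁, h₂, h₀], ![a₁, b₁, c₁], ![a₂, b₂, c₂]]] at hdet
  simp only [Matrix.cons_val', Matrix.cons_val_zero, Matrix.cons_val_one, Matrix.head_cons,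
    Matrix.empty_val', Matrix.cons_val_fin_one, Matrix.head_fin_const,
    Matrix.cons_val_two, Matrix.tail_cons] at hdet
  have hD : (1 : ℝ) ≤ |((h₁ * b₁ * c₂ - h₁ * c₁ * b₂ - h₂ * a₁ * c₂ + h₂ * c₁ * a₂ +
      h₀ * a₁ * b₂ - h₀ * b₁ * a₂ : ℤ) : ℝ)| := by
    rw [← Int.cast_abs]
    exact_mod_cast Int.one_le_abs hdet
  have hkey : ((h₁ * b₁ * c₂ - h₁ * c₁ * b₂ - h₂ * a₁ * c₂ + h₂ * c₁ * a₂ +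
      h₀ * a₁ * b₂ - h₀ * b₁ * a₂ : ℤ) : ℝ) =
      Λ * ((a₁ : ℝ) * b₂ - (a₂ : ℝ) * b₁) - r₁ * ((h₁ : ℝ) * b₂ - (h₂ : ℝ) * a₂)
        + r₂ * ((h₁ : ℝ) * b₁ - (h₂ : ℝ) * a₁) := by
    rw [hΛ, hr₁, hr₂]; push_cast; ring
  rw [hkey] at hD
  have htri : |Λ * ((a₁ : ℝ) * b₂ - (a₂ : ℝ) * b₁) - r₁ * ((h₁ : ℝ) * b₂ - (h₂ : ℝ) * a₂)
        + r₂ * ((h₁ : ℝ) * b₁ - (h₂ : ℝ) * a₁)| ≤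
      |Λ| * |(a₁ : ℝ) * b₂ - (a₂ : ℝ) * b₁| + |r₁| * |(h₁ : ℝ) * b₂ - (h₂ : ℝ) * a₂|
        + |r₂| * |(h₁ : ℝ) * b₁ - (h₂ : ℝ) * a₁| := by
    calc _ ≤ |Λ * ((a₁ : ℝ) * b₂ - (a₂ : ℝ) * b₁) - r₁ * ((h₁ : ℝ) * b₂ - (h₂ : ℝ) * a₂)|
          + |r₂ * ((h₁ : ℝ) * b₁ - (h₂ : ℝ) * a₁)| := abs_add_le _ _
      _ ≤ |Λ * ((a₁ : ℝ) * b₂ - (a₂ : ℝ) * b₁)| + |r₁ * ((h₁ : ℝ) * b₂ - (h₂ : ℝ) * a₂)|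
          + |r₂ * ((h₁ : ℝ) * b₁ - (h₂ : ℝ) * a₁)| := by
        linarith [abs_sub (Λ * ((a₁ : ℝ) * b₂ - (a₂ : ℝ) * b₁))
          (r₁ * ((h₁ : ℝ) * b₂ - (h₂ : ℝ) * a₂))]
      _ = _ := by rw [abs_mul, abs_mul, abs_mul]
  have ha₁ : |(a₁ : ℝ)| ≤ M₁ := le_max_left _ _
  have hb₁ : |(b₁ : ℝ)| ≤ M₁ := le_max_right _ _
  have ha₂ : |(a₂ : ℝ)| ≤ M₂ := le_max_left _ _
  have hb₂ : |(b₂ : ℝ)| ≤ M₂ := le_max_right _ _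
  have hh₁ : |(h₁ : ℝ)| ≤ H := le_max_left _ _
  have hh₂ : |(h₂ : ℝ)| ≤ H := le_max_right _ _
  have hm1 : |(a₁ : ℝ) * b₂ - (a₂ : ℝ) * b₁| ≤ 2 * M₁ * M₂ := by
    have t1 : |(a₁:ℝ)| * |(b₂:ℝ)| ≤ M₁ * M₂ :=
      mul_le_mul ha₁ hb₂ (abs_nonneg _) (le_trans (abs_nonneg _) ha₁)
    have t2 : |(a₂:ℝ)| * |(b₁:ℝ)| ≤ M₂ * M₁ :=
      mul_le_mul ha₂ hb₁ (abs_nonneg _) (le_trans (abs_nonneg _) ha₂)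
    have e : M₂ * M₁ = M₁ * M₂ := by ring
    have := abs_sub ((a₁:ℝ) * b₂) ((a₂:ℝ) * b₁)
    rw [abs_mul, abs_mul] at this
    linarith
  have hm2 : |(h₁ : ℝ) * b₂ - (h₂ : ℝ) * a₂| ≤ 2 * H * M₂ := by
    have t1 : |(h₁:ℝ)| * |(b₂:ℝ)| ≤ H * M₂ :=
      mul_le_mul hh₁ hb₂ (abs_nonneg _) (le_trans (abs_nonneg _) hh₁)
    have t2 : |(h₂:ℝ)| * |(a₂:ℝ)| ≤ H * M₂ :=
      mul_le_mul hh₂ ha₂ (abs_nonneg _) (le_trans (abs_nonneg _) hh₂)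
    have := abs_sub ((h₁:ℝ) * b₂) ((h₂:ℝ) * a₂)
    rw [abs_mul, abs_mul] at this
    linarith
  have hm3 : |(h₁ : ℝ) * b₁ - (h₂ : ℝ) * a₁| ≤ 2 * H * M₁ := by
    have t1 : |(h₁:ℝ)| * |(b₁:ℝ)| ≤ H * M₁ :=
      mul_le_mul hh₁ hb₁ (abs_nonneg _) (le_trans (abs_nonneg _) hh₁)
    have t2 : |(h₂:ℝ)| * |(a₁:ℝ)| ≤ H * M₁ :=
      mul_le_mul hh₂ ha₁ (abs_nonneg _) (le_trans (abs_nonneg _) hh₂)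
    have := abs_sub ((h₁:ℝ) * b₁) ((h₂:ℝ) * a₁)
    rw [abs_mul, abs_mul] at this
    linarith
  have t1 := mul_le_mul_of_nonneg_left hm1 (abs_nonneg Λ)
  have t2 := mul_le_mul_of_nonneg_left hm2 (abs_nonneg r₁)
  have t3 := mul_le_mul_of_nonneg_left hm3 (abs_nonneg r₂)
  have e1 : |Λ| * (2 * M₁ * M₂) = 2 * |Λ| * M₁ * M₂ := by ring
  have e2 : |r₁| * (2 * H * M₂) = 2 * H * M₂ * |r₁| := by ring
  have e3 : |r₂| * (2 * H * M₁) = 2 * H * M₁ * |r₂| := by ring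
  linarith
end
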